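/- arXiv:1108.5627 — 2 statements merged into one kernel-verified Lean document; each statement's English description precedes it below -/
import Mathlib

section
/- Let B be a simple set of polynomials. The following are equivalent: (i) there exists α > 1 such that {α^k} and {(1/α)^k} are both B-multiplier sequences; (ii) for every α > 1, both {α^k} and {(1/α)^k} are B-multiplier sequences. -/
open Polynomial

/-- A real polynomial has only real zeros: either it is the zero polynomial
(by convention), or every complex root is real. -/
def RealRooted (p : Polynomial ℝ) : Prop :=
  p = 0 ∨ ∀ z : ℂ, Polynomial.aeval z p = 0 → z.im = 0

/-- A simple set of polynomials: deg b_k = k for all k. -/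
def SimpleSet (B : ℕ → Polynomial ℝ) : Prop :=
  ∀ k, (B k).degree = (k : ℕ)

/-- γ is a B-multiplier sequence: applying γ to B-expansion coefficients of any
polynomial with only real zeros yields a polynomial with only real zeros. -/
def IsMultSeq (B : ℕ → Polynomial ℝ) (γ : ℕ → ℝ) : Prop :=
  ∀ (n : ℕ) (a : ℕ → ℝ),
    RealRooted (∑ k ∈ Finset.range (n + 1), Polynomial.C (a k) * B k) →
    RealRooted (∑ k ∈ Finset.range (n + 1), Polynomial.C (a k * γ k) * B k)

/-- A classical multiplier sequence: multiplier sequence for the standard basis. -/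
def ClassicalMS (γ : ℕ → ℝ) : Prop :=
  IsMultSeq (fun k => Polynomial.X ^ k) γ

/-!
After a translation we may assume `B 1 = c X`; we show that then every `B k` is a monomial.
If `B k = c_k X ^ k` for `k < m`, the multiplier `(t ^ k)` acts on that part of the basis as
`p ↦ p (t X)`; undoing this dilation, it acts on a monic `p` of degree `m` by adding
`δ = (t ^ m b (X / t) - b) / lead b`, where `b = B m`, a polynomial of degree `< m` with
coefficients `δ_i = b_i / lead b * (t ^ (m - i) - 1)`. For a real-rooted monic `q` of degree `m`,
`q_(m-1) ^ 2 - 2 q_(m-2)` is the sum of the squares of its roots, hence nonnegative, and zero only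
for `q = X ^ m`. Testing this on `X ^ (m - 2) (X - s) (X - e) + δ` for `t = α` and `t = α⁻¹`, where
`t ^ 2 - 1` changes sign, kills all lower coefficients of `b`. Finally, once
`B k = c_k (X - v) ^ k`, every `(t ^ k)` with `t ≠ 0` acts by the affine substitution
`X ↦ t (X - v) + v`.
-/

namespace Multiset

variable {R : Type*}

theorem esymm_cons_succ [CommSemiring R] (a : R) (s : Multiset R) (k : ℕ) :
    (a ::ₘ s).esymm (k + 1) = s.esymm (k + 1) + a * s.esymm k := by
  simp only [esymm, powersetCard_cons, map_add, sum_add, map_map, Function.comp_def, prod_cons,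
    sum_map_mul_left]

theorem esymm_one [CommSemiring R] (s : Multiset R) : s.esymm 1 = s.sum := by
  simp [esymm, powersetCard_one, map_map]

theorem sum_map_sq_eq_sq_sum_sub [CommRing R] (s : Multiset R) :
    (s.map (· ^ 2)).sum = s.sum ^ 2 - 2 * s.esymm 2 := by
  induction s using Multiset.induction with
  | empty => simp [esymm, powersetCard_zero_right]
  | cons a s ih =>
    rw [map_cons, sum_cons, sum_cons, esymm_cons_succ, esymm_one, ih]
    ring

end Multiset

theorem realRooted_iff_splits {p : ℝ[X]} : RealRooted p ↔ p.Splits := by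
  constructor
  · rintro (rfl | hp)
    · exact Splits.zero
    refine Splits.of_splits_map (algebraMap ℝ ℂ) (IsAlgClosed.splits _) fun z hz => ⟨z.re, ?_⟩
    have hz0 : aeval z p = 0 := by
      rw [aeval_def, ← eval_map]
      exact (mem_roots'.mp hz).2
    exact Complex.ext (by simp) (by simp [hp z hz0])
  · intro hp
    by_cases h0 : p = 0
    · exact Or.inl h0
    refine Or.inr fun z hz => ?_
    obtain ⟨r, rfl⟩ := hp.mem_range_of_isRoot h0 (i := algebraMap ℝ ℂ) (by
      rwa [IsRoot, eval_map, ← aeval_def])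
    simp

theorem RealRooted.comp {p g : ℝ[X]} (hp : RealRooted p) (hg : g.natDegree = 1) :
    RealRooted (p.comp g) := by
  have : g.leadingCoeff ≠ 0 := leadingCoeff_ne_zero.mpr (ne_zero_of_natDegree_gt (hg ▸ one_pos))
  rw [realRooted_iff_splits] at hp ⊢
  exact hp.comp_of_natDegree_le_one_of_invertible hg.le (invertibleOfNonzero this)

theorem realRooted_comp_iff {p g : ℝ[X]} (hg : g.natDegree = 1) :
    RealRooted (p.comp g) ↔ RealRooted p := by
  refine ⟨fun h => ?_, (·.comp hg)⟩
  have hg1 : g.coeff 1 ≠ 0 := by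
    rw [← hg]
    exact leadingCoeff_ne_zero.mpr (ne_zero_of_natDegree_gt (hg ▸ one_pos))
  obtain ⟨a, b, ha, rfl⟩ : ∃ a b : ℝ, a ≠ 0 ∧ g = C a * X + C b :=
    ⟨_, _, hg1, eq_X_add_C_of_natDegree_le_one hg.le⟩
  have hinv : (C a * X + C b).comp (C a⁻¹ * (X - C b)) = X := by
    rw [add_comp, mul_comp, C_comp, X_comp, C_comp, ← mul_assoc, ← C_mul, mul_inv_cancel₀ ha]
    simp
  have := h.comp (g := C a⁻¹ * (X - C b))
    (by rw [natDegree_C_mul (inv_ne_zero ha), natDegree_X_sub_C])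
  rwa [comp_assoc, hinv, comp_X] at this

theorem Polynomial.Splits.sq_coeff_sub_two_mul_coeff {F : Type*} [Field F] {q : F[X]}
    (hq : q.Splits) (hm : q.Monic) {n : ℕ} (hdeg : q.natDegree = n + 2) :
    q.coeff (n + 1) ^ 2 - 2 * q.coeff n = (q.roots.map (· ^ 2)).sum := by
  rw [Multiset.sum_map_sq_eq_sq_sum_sub, coeff_eq_esymm_roots_of_splits hq (by omega),
    coeff_eq_esymm_roots_of_splits hq (by omega), hm.leadingCoeff, hdeg,
    show n + 2 - (n + 1) = 1 by omega, show n + 2 - n = 2 by omega, Multiset.esymm_one]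
  ring

theorem RealRooted.sq_coeff_sub_two_mul_coeff_nonneg {q : ℝ[X]} (hq : RealRooted q)
    (hm : q.Monic) {n : ℕ} (hdeg : q.natDegree = n + 2) :
    0 ≤ q.coeff (n + 1) ^ 2 - 2 * q.coeff n := by
  rw [(realRooted_iff_splits.mp hq).sq_coeff_sub_two_mul_coeff hm hdeg]
  exact Multiset.sum_nonneg fun x hx => by
    obtain ⟨r, -, rfl⟩ := Multiset.mem_map.mp hx
    positivity

theorem RealRooted.eq_X_pow_of_coeff_eq_zero {q : ℝ[X]} (hq : RealRooted q)
    (hm : q.Monic) {n : ℕ} (hdeg : q.natDegree = n + 2)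
    (h₁ : q.coeff (n + 1) = 0) (h₀ : q.coeff n = 0) : q = X ^ (n + 2) := by
  have hs := realRooted_iff_splits.mp hq
  have hsum : (q.roots.map (· ^ 2)).sum = 0 := by
    rw [← hs.sq_coeff_sub_two_mul_coeff hm hdeg, h₁, h₀]
    ring
  have hroots : q.roots = Multiset.replicate (n + 2) 0 := by
    refine Multiset.eq_replicate.mpr ⟨by rw [splits_iff_card_roots.mp hs, hdeg], fun r hr => ?_⟩
    refine pow_eq_zero_iff two_ne_zero |>.mp <|
      Multiset.all_zero_of_le_zero_le_of_sum_eq_zero ?_ hsum _ (Multiset.mem_map_of_mem _ hr)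
    simp only [Multiset.mem_map]
    rintro _ ⟨x, -, rfl⟩
    positivity
  rw [hs.eq_prod_roots_of_monic hm, hroots]
  simp [pow_succ']

theorem SimpleSet.ne_zero {B : ℕ → ℝ[X]} (hB : SimpleSet B) (k : ℕ) : B k ≠ 0 :=
  fun h => by simpa [h] using hB k

theorem SimpleSet.comp {B : ℕ → ℝ[X]} (hB : SimpleSet B) {g : ℝ[X]} (hg : g.natDegree = 1) :
    SimpleSet fun k => (B k).comp g := by
  intro k
  have hg0 : g ≠ 0 := ne_zero_of_natDegree_gt (hg ▸ one_pos)
  have hcomp : (B k).comp g ≠ 0 := by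
    rw [← leadingCoeff_ne_zero, leadingCoeff_comp (by omega)]
    exact mul_ne_zero (leadingCoeff_ne_zero.mpr (hB.ne_zero k))
      (pow_ne_zero _ (leadingCoeff_ne_zero.mpr hg0))
  rw [degree_eq_natDegree hcomp, natDegree_comp, hg, mul_one,
    natDegree_eq_of_degree_eq_some (hB k)]

theorem isMultSeq_comp_iff {B : ℕ → ℝ[X]} {γ : ℕ → ℝ} {g : ℝ[X]} (hg : g.natDegree = 1) :
    IsMultSeq (fun k => (B k).comp g) γ ↔ IsMultSeq B γ := by
  have hsum (a : ℕ → ℝ) (n : ℕ) : ∑ k ∈ Finset.range (n + 1), C (a k) * (B k).comp g =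
      (∑ k ∈ Finset.range (n + 1), C (a k) * B k).comp g := by
    simp [mul_comp]
  simp only [IsMultSeq, hsum, realRooted_comp_iff hg]

theorem isMultSeq_pow_of_eq_C_mul_X_pow {B : ℕ → ℝ[X]} {c : ℕ → ℝ}
    (hmono : ∀ k, B k = C (c k) * X ^ k) {t : ℝ} (ht : t ≠ 0) : IsMultSeq B (t ^ ·) := by
  intro n a h
  have hdil : ∑ k ∈ Finset.range (n + 1), C (a k * t ^ k) * B k =
      (∑ k ∈ Finset.range (n + 1), C (a k) * B k).comp (C t * X) := by
    simp only [hmono, sum_comp, mul_comp, C_comp, X_pow_comp, mul_pow, C_mul, C_pow]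
    exact Finset.sum_congr rfl fun k _ => by ring
  rw [hdil]
  exact h.comp (natDegree_C_mul_X t ht)

theorem comp_C_mul_X_eq_sum_range {r : ℝ[X]} {m : ℕ} (hr : ∀ j, m ≤ j → r.coeff j = 0) (s : ℝ) :
    r.comp (C s * X) = ∑ k ∈ Finset.range m, C (r.coeff k * s ^ k) * X ^ k := by
  ext j
  simp only [comp_C_mul_X_coeff, finsetSum_coeff, coeff_C_mul_X_pow, Finset.sum_ite_eq,
    Finset.mem_range]
  split_ifs with hj
  · rfl
  · simp [hr j (not_lt.mp hj)]

noncomputable def dilationDefect (m : ℕ) (t : ℝ) (b : ℝ[X]) : ℝ[X] :=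
  C b.leadingCoeff⁻¹ * (C (t ^ m) * b.comp (C t⁻¹ * X) - b)

theorem coeff_dilationDefect {m k : ℕ} (hk : k ≤ m) {t : ℝ} (ht : t ≠ 0) (b : ℝ[X]) :
    (dilationDefect m t b).coeff k = b.coeff k / b.leadingCoeff * (t ^ (m - k) - 1) := by
  rw [dilationDefect, coeff_C_mul, coeff_sub, coeff_C_mul, comp_C_mul_X_coeff, pow_sub₀ _ ht hk,
    inv_pow]
  ring

theorem degree_dilationDefect_lt {m : ℕ} {t : ℝ} (ht : t ≠ 0) {b : ℝ[X]} (hb : b.natDegree ≤ m) :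
    (dilationDefect m t b).degree < m := by
  refine (degree_lt_iff_coeff_zero _ _).mpr fun j hj => ?_
  rcases hj.eq_or_lt with rfl | hj
  · simp [coeff_dilationDefect le_rfl ht]
  · rw [dilationDefect, coeff_C_mul, coeff_sub, coeff_C_mul, comp_C_mul_X_coeff,
      coeff_eq_zero_of_natDegree_lt (hb.trans_lt hj)]
    ring

theorem IsMultSeq.realRooted_add_dilationDefect {B : ℕ → ℝ[X]} (hB : SimpleSet B) {m : ℕ}
    (hlow : ∀ k < m, B k = C (B k).leadingCoeff * X ^ k) {t : ℝ} (ht : t ≠ 0)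
    (hγ : IsMultSeq B (t ^ ·)) {p : ℝ[X]} (hpm : p.natDegree ≤ m) (hp : RealRooted p) :
    RealRooted (p + C (p.coeff m) * dilationDefect m t (B m)) := by
  set a := p.coeff m / (B m).leadingCoeff
  set r := p - C a * B m
  have hBm : (B m).natDegree = m := natDegree_eq_of_degree_eq_some (hB m)
  have hlead (k : ℕ) : (B k).leadingCoeff ≠ 0 := leadingCoeff_ne_zero.mpr (hB.ne_zero k)
  have hr (j : ℕ) (hj : m ≤ j) : r.coeff j = 0 := by
    rcases hj.eq_or_lt with rfl | hj
    · have hcoeff : (B m).coeff m = (B m).leadingCoeff := by rw [leadingCoeff, hBm]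
      rw [coeff_sub, coeff_C_mul, hcoeff, div_mul_cancel₀ _ (hlead m), sub_self]
    · simp [r, coeff_eq_zero_of_natDegree_lt (hpm.trans_lt hj),
        coeff_eq_zero_of_natDegree_lt (hBm ▸ hj)]
  -- the coefficients of `p` in the basis `B`
  set e : ℕ → ℝ := fun k => if k < m then r.coeff k / (B k).leadingCoeff else a
  have hexp (s : ℝ) : ∑ k ∈ Finset.range (m + 1), C (e k * s ^ k) * B k =
      r.comp (C s * X) + C (a * s ^ m) * B m := by
    rw [Finset.sum_range_succ, comp_C_mul_X_eq_sum_range hr]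
    refine congrArg₂ _ (Finset.sum_congr rfl fun k hk => ?_) (by simp [e])
    rw [Finset.mem_range] at hk
    rw [hlow k hk, ← mul_assoc, ← C_mul]
    simp only [e, if_pos hk]
    field_simp [hlead k]
  have hp_eq : ∑ k ∈ Finset.range (m + 1), C (e k) * B k = p := by
    simpa [r] using hexp 1
  have hdil := (hγ m e (hp_eq ▸ hp)).comp (natDegree_C_mul_X t⁻¹ (inv_ne_zero ht))
  have hX : C t * (C t⁻¹ * X) = X := by rw [← mul_assoc, ← C_mul, mul_inv_cancel₀ ht, C_1, one_mul]
  simp only [hexp t, add_comp, comp_assoc, mul_comp, C_comp, X_comp, hX, comp_X] at hdil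
  convert hdil using 1
  simp only [dilationDefect, r, a, div_eq_mul_inv, C_mul]
  ring

theorem coeff_constraints_of_forall_realRooted_add {δ : ℝ[X]} {n : ℕ}
    (hδ : δ.degree < ↑(n + 2))
    (h : ∀ p : ℝ[X], p.Monic → p.natDegree = n + 2 → RealRooted p → RealRooted (p + δ))
    (s e : ℝ) :
    0 ≤ (δ.coeff (n + 1) - (s + e)) ^ 2 - 2 * (s * e + δ.coeff n) ∧
      (δ.coeff (n + 1) = s + e → s * e + δ.coeff n = 0 → ∀ i < n, δ.coeff i = 0) := by
  set p : ℝ[X] := X ^ n * (X - C s) * (X - C e)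
  have hpm : p.Monic := ((monic_X_pow n).mul (monic_X_sub_C s)).mul (monic_X_sub_C e)
  have hpdeg : p.natDegree = n + 2 := by
    rw [((monic_X_pow n).mul (monic_X_sub_C s)).natDegree_mul (monic_X_sub_C e),
      (monic_X_pow n).natDegree_mul (monic_X_sub_C s), natDegree_X_pow, natDegree_X_sub_C,
      natDegree_X_sub_C]
  have hp : RealRooted p := realRooted_iff_splits.mpr
    (((Splits.X_pow n).mul (Splits.X_sub_C s)).mul (Splits.X_sub_C e))
  have hδp : δ.degree < p.degree := by rwa [degree_eq_natDegree hpm.ne_zero, hpdeg]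
  have hqm : (p + δ).Monic := hpm.add_of_left hδp
  have hqdeg : (p + δ).natDegree = n + 2 := by rw [natDegree_add_eq_left_of_degree_lt hδp, hpdeg]
  have hq := h p hpm hpdeg hp
  have hp_eq : p = X ^ (n + 2) - C (s + e) * X ^ (n + 1) + C (s * e) * X ^ n := by
    simp only [p, C_add, C_mul]
    ring
  have hcoeff (i : ℕ) : (p + δ).coeff i =
      (if i = n + 2 then 1 else 0) - (if i = n + 1 then s + e else 0) +
        (if i = n then s * e else 0) + δ.coeff i := by
    rw [hp_eq, coeff_add, coeff_add, coeff_sub, coeff_X_pow, coeff_C_mul_X_pow,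
      coeff_C_mul_X_pow]
  have h₁ : (p + δ).coeff (n + 1) = δ.coeff (n + 1) - (s + e) := by simp [hcoeff]; ring
  have h₀ : (p + δ).coeff n = s * e + δ.coeff n := by simp [hcoeff]
  refine ⟨by simpa [h₁, h₀] using hq.sq_coeff_sub_two_mul_coeff_nonneg hqm hqdeg,
    fun hs he i hi => ?_⟩
  have hX := congrArg (coeff · i) <| hq.eq_X_pow_of_coeff_eq_zero hqm hqdeg
    (by rw [h₁, hs, sub_self]) (by rw [h₀, he])
  simpa [hcoeff, coeff_X_pow, hi.ne, (hi.trans (Nat.lt_succ_self n)).ne, (by omega : i ≠ n + 2)]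
    using hX

theorem Polynomial.eq_C_leadingCoeff_mul_X_pow_of_coeff_eq_zero {R : Type*} [Semiring R]
    {p : R[X]} (h : ∀ i < p.natDegree, p.coeff i = 0) : p = C p.leadingCoeff * X ^ p.natDegree := by
  ext i
  rw [coeff_C_mul_X_pow]
  split_ifs with hi
  · rw [hi]
    rfl
  · rcases Nat.lt_or_gt_of_ne hi with hi | hi
    · exact h i hi
    · exact coeff_eq_zero_of_natDegree_lt hi

theorem SimpleSet.eq_C_mul_X_pow_of_forall_lt {B : ℕ → ℝ[X]} (hB : SimpleSet B) {α : ℝ}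
    (hα : 1 < α) (hup : IsMultSeq B (α ^ ·)) (hdown : IsMultSeq B (α⁻¹ ^ ·)) {n : ℕ}
    (hlow : ∀ k < n + 2, B k = C (B k).leadingCoeff * X ^ k) :
    B (n + 2) = C (B (n + 2)).leadingCoeff * X ^ (n + 2) := by
  set b := B (n + 2)
  have hbdeg : b.natDegree = n + 2 := natDegree_eq_of_degree_eq_some (hB _)
  have hc : b.leadingCoeff ≠ 0 := leadingCoeff_ne_zero.mpr (hB.ne_zero _)
  have hconstraints {t : ℝ} (ht : t ≠ 0) (hγ : IsMultSeq B (t ^ ·)) :=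
    coeff_constraints_of_forall_realRooted_add (degree_dilationDefect_lt ht hbdeg.le)
      fun p hm hd hp => by
        simpa [hd ▸ hm.coeff_natDegree] using hγ.realRooted_add_dilationDefect hB hlow ht hd.le hp
  have hα0 : α ≠ 0 := by positivity
  -- with `s = δ_(n+1)` and `e = 0`, the constraint reads `δ_n ≤ 0`, i.e. `b_n (t ^ 2 - 1) ≤ 0`
  have hn : b.coeff n = 0 := by
    have hsign {t : ℝ} (ht : t ≠ 0) (hγ : IsMultSeq B (t ^ ·)) :
        b.coeff n / b.leadingCoeff * (t ^ 2 - 1) ≤ 0 := by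
      have := (hconstraints ht hγ ((dilationDefect (n + 2) t b).coeff (n + 1)) 0).1
      rw [coeff_dilationDefect (k := n) (by omega) ht, show n + 2 - n = 2 by omega] at this
      linarith
    have h1 : 0 < α ^ 2 - 1 := by nlinarith
    have h2 : α⁻¹ ^ 2 - 1 < 0 := by
      rw [inv_pow, sub_neg, inv_lt_one₀ (by positivity)]
      nlinarith
    have : b.coeff n / b.leadingCoeff = 0 := by
      nlinarith [hsign hα0 hup, hsign (inv_ne_zero hα0) hdown]
    exact (div_eq_zero_iff.mp this).resolve_right hc
  -- the same test for `t = α` is now an equality case, so `p + δ = X ^ (n + 2)`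
  have hlt (i : ℕ) (hi : i < n) : b.coeff i = 0 := by
    have := (hconstraints hα0 hup ((dilationDefect (n + 2) α b).coeff (n + 1)) 0).2 (by ring)
      (by rw [coeff_dilationDefect (k := n) (by omega) hα0, hn]; ring) i hi
    rw [coeff_dilationDefect (by omega) hα0] at this
    have hpow : α ^ (n + 2 - i) - 1 ≠ 0 := (sub_pos.mpr (one_lt_pow₀ hα (by omega))).ne'
    exact (div_eq_zero_iff.mp ((mul_eq_zero.mp this).resolve_right hpow)).resolve_right hc
  -- with `s = e = δ_(n+1)` the constraint reads `-δ_(n+1) ^ 2 ≥ 0`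
  have hn1 : b.coeff (n + 1) = 0 := by
    set d := (dilationDefect (n + 2) α b).coeff (n + 1) with hd
    have := (hconstraints hα0 hup d d).1
    rw [coeff_dilationDefect (k := n) (by omega) hα0, hn, zero_div, zero_mul, add_zero,
      ← hd] at this
    have hd0 : d = 0 := pow_eq_zero_iff two_ne_zero |>.mp (by nlinarith [sq_nonneg d])
    rw [hd, coeff_dilationDefect (by omega) hα0, show n + 2 - (n + 1) = 1 by omega,
      pow_one] at hd0
    exact (div_eq_zero_iff.mp ((mul_eq_zero.mp hd0).resolve_right (by linarith))).resolve_right hc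
  have hcoeff (i : ℕ) (hi : i < b.natDegree) : b.coeff i = 0 := by
    rcases (by omega : i < n ∨ i = n ∨ i = n + 1) with hi | rfl | rfl
    exacts [hlt i hi, hn, hn1]
  have := eq_C_leadingCoeff_mul_X_pow_of_coeff_eq_zero hcoeff
  rwa [hbdeg] at this

theorem SimpleSet.eq_C_mul_X_pow_of_isMultSeq {B : ℕ → ℝ[X]} (hB : SimpleSet B)
    (hB₁ : (B 1).coeff 0 = 0) {α : ℝ} (hα : 1 < α) (hup : IsMultSeq B (α ^ ·))
    (hdown : IsMultSeq B (α⁻¹ ^ ·)) (k : ℕ) : B k = C (B k).leadingCoeff * X ^ k := by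
  induction k using Nat.strong_induction_on with
  | _ k ih =>
    match k with
    | 0 =>
      rw [leadingCoeff, natDegree_eq_of_degree_eq_some (hB 0), pow_zero, mul_one]
      exact eq_C_of_degree_le_zero (hB 0).le
    | 1 =>
      conv_lhs => rw [eq_X_add_C_of_degree_eq_one (hB 1)]
      simp [hB₁]
    | n + 2 => exact hB.eq_C_mul_X_pow_of_forall_lt hα hup hdown ih

theorem stmt_5 (B : ℕ → Polynomial ℝ) (hB : SimpleSet B) :
    (∃ α : ℝ, 1 < α ∧ IsMultSeq B (fun k => α ^ k) ∧
        IsMultSeq B (fun k => (1 / α) ^ k)) ↔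
    (∀ α : ℝ, 1 < α → IsMultSeq B (fun k => α ^ k) ∧
        IsMultSeq B (fun k => (1 / α) ^ k)) := by
  refine ⟨fun ⟨α, hα, hup, hdown⟩ β hβ => ?_, fun h => ⟨2, one_lt_two, h 2 one_lt_two⟩⟩
  obtain ⟨v, hv⟩ := exists_root_of_degree_eq_one (hB 1)
  have hshift : (X + C v).natDegree = 1 := natDegree_X_add_C v
  have hmono := (hB.comp hshift).eq_C_mul_X_pow_of_isMultSeq
    (by simpa [coeff_zero_eq_eval_zero] using hv) hα ((isMultSeq_comp_iff hshift).mpr hup)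
    ((isMultSeq_comp_iff hshift).mpr (by simpa only [one_div] using hdown))
  exact ⟨(isMultSeq_comp_iff hshift).mp (isMultSeq_pow_of_eq_C_mul_X_pow hmono (by positivity)),
    (isMultSeq_comp_iff hshift).mp (isMultSeq_pow_of_eq_C_mul_X_pow hmono (by positivity))⟩
end

section
/- If {γ_k} is a classical multiplier sequence, then its terms satisfy Turán's inequality: γ_k^2 − γ_{k−1}γ_{k+1} ≥ 0 for all k ≥ 1. -/
open Polynomial

/-!
Applying `γ` to `x^(k-1) (x + 1)^2` yields `x^(k-1) (γ_(k+1) x² + 2 γ_k x + γ_(k-1))`. Its quadratic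
factor can only have real roots if its discriminant `4 (γ_k² - γ_(k-1) γ_(k+1))` is nonnegative.
-/

namespace RealRooted

variable {p q : ℝ[X]}

lemma mul (hp : RealRooted p) (hq : RealRooted q) : RealRooted (p * q) := by
  rcases hp with rfl | hp
  · simp [RealRooted]
  rcases hq with rfl | hq
  · simp [RealRooted]
  refine Or.inr fun z hz => ?_
  rw [map_mul] at hz
  exact (mul_eq_zero.mp hz).elim (hp z) (hq z)

lemma pow (hp : RealRooted p) (n : ℕ) : RealRooted (p ^ n) := by
  induction n with
  | zero => exact Or.inr fun z hz => by simp at hz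
  | succ n ih => rw [pow_succ]; exact ih.mul hp

lemma of_mul (h : RealRooted (p * q)) (hp : p ≠ 0) : RealRooted q := by
  rcases h with h | h
  · exact Or.inl ((mul_eq_zero.mp h).resolve_left hp)
  · exact Or.inr fun z hz => h z (by rw [map_mul, hz, mul_zero])

/-- If `Δ = discrim a b c < 0`, then `(-b + i √(-Δ)) / 2a` is a non-real root. -/
lemma discrim_nonneg {a b c : ℝ} (h : RealRooted (C a * X ^ 2 + C b * X + C c)) :
    0 ≤ discrim a b c := by
  by_contra! hD
  have ha : a ≠ 0 := by
    rintro rfl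
    exact (sq_nonneg b).not_gt (by simpa [discrim] using hD)
  set r := √(-discrim a b c)
  have hr : 0 < r := Real.sqrt_pos.mpr (neg_pos.mpr hD)
  set s : ℂ := Complex.I * r
  have hs : discrim (a : ℂ) b c = s * s := by
    have hr2 : r ^ 2 = -discrim a b c := Real.sq_sqrt (neg_pos.mpr hD).le
    have hr2' : (r : ℂ) ^ 2 = -discrim (a : ℂ) b c := by
      simp only [discrim] at hr2 ⊢
      exact_mod_cast hr2
    linear_combination hr2' - (r : ℂ) ^ 2 * Complex.I_sq
  set z : ℂ := (-b + s) / (2 * a)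
  have hz : (a : ℂ) * (z * z) + b * z + c = 0 :=
    (quadratic_eq_zero_iff (Complex.ofReal_ne_zero.mpr ha) hs z).mpr (Or.inl rfl)
  rcases h with h | h
  · exact ha (by simpa using congrArg (coeff · 2) h)
  have him := h z (by simpa [sq] using hz)
  have : z.im = r / (2 * a) := by
    simp only [z, s, ← Complex.ofReal_ofNat, ← Complex.ofReal_mul, Complex.div_ofReal_im]
    simp
  rw [this] at him
  exact div_ne_zero hr.ne' (mul_ne_zero two_ne_zero ha) him

end RealRooted

lemma realRooted_X_sub_C (r : ℝ) : RealRooted (X - C r) :=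
  Or.inr fun z hz => by
    rw [map_sub, aeval_X, aeval_C, sub_eq_zero] at hz
    simp [hz]

lemma sum_range_add_three_C_mul_X_pow {m : ℕ} (g : ℕ → ℝ) (hg : ∀ j < m, g j = 0) :
    ∑ j ∈ Finset.range (m + 3), C (g j) * X ^ j =
      X ^ m * (C (g (m + 2)) * X ^ 2 + C (g (m + 1)) * X + C (g m)) := by
  rw [Finset.sum_range_succ, Finset.sum_range_succ, Finset.sum_range_succ,
    Finset.sum_eq_zero fun j hj => by rw [hg j (Finset.mem_range.mp hj), C_0, zero_mul]]
  ring

theorem stmt_8 (γ : ℕ → ℝ) (hγ : ClassicalMS γ) :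
    ∀ k : ℕ, 1 ≤ k → γ k ^ 2 - γ (k - 1) * γ (k + 1) ≥ 0 := by
  intro k hk
  obtain ⟨m, rfl⟩ : ∃ m, k = m + 1 := ⟨k - 1, by omega⟩
  let a : ℕ → ℝ := fun j => if j = m ∨ j = m + 2 then 1 else if j = m + 1 then 2 else 0
  have ha : ∀ j < m, a j = 0 := fun j hj => by
    simp only [a]; rw [if_neg (by omega), if_neg (by omega)]
  have hin : RealRooted (∑ j ∈ Finset.range (m + 3), C (a j) * X ^ j) := by
    rw [sum_range_add_three_C_mul_X_pow a ha]
    convert ((realRooted_X_sub_C 0).pow m).mul ((realRooted_X_sub_C (-1)).pow 2) using 1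
    simp [a, C_ofNat]
    ring
  have hout := hγ (m + 2) a hin
  rw [sum_range_add_three_C_mul_X_pow (fun j => a j * γ j) fun j hj => by simp [ha j hj]]
    at hout
  have hdisc := (hout.of_mul (pow_ne_zero m X_ne_zero)).discrim_nonneg
  simp only [a, discrim] at hdisc
  norm_num at hdisc ⊢
  linarith
end
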